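/- Let d ≥ 2 and n ∈ ℕ with n ≥ 1. For ε ∈ (0,1/2] and integer l ≥ n, the number a_{d,n,ε}(l) defined by cos a_{d,n,ε}(l) = 1 − ε·k_{d,n}(l) with a_{d,n,ε}(l) ∈ (0,π/3] is well defined, and there exist constants 0 < c ≤ C, depending only on d and n, such that c·ε^{1/2}·l^{−1} ≤ a_{d,n,ε}(l) ≤ C·ε^{1/2}·l^{−1} for all l ≥ n and all ε ∈ (0,1/2]. -/

import Mathlib

open MeasureTheory Real Filter
open scoped ENNReal NNReal ComplexConjugate

noncomputable section

abbrev Sphere (d : ℕ) : Type := ↥(Metric.sphere (0 : EuclideanSpace ℝ (Fin d)) 1)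

def sphereMeasure (d : ℕ) : Measure (Sphere d) := μH[(d : ℝ) - 1]

def sphereVol (d : ℕ) : ℝ := (sphereMeasure d Set.univ).toReal

/-- Membership in the weight class `W(T, t₀, T₀)`. -/
def memW (T t₀ T₀ : ℝ) (ρ : ℝ → ℝ) : Prop :=
  MemLp ρ 2 (volume.restrict (Set.Ioc (0 : ℝ) T)) ∧
    (∀ᵐ θ ∂(volume.restrict (Set.Ioc (0 : ℝ) T)), 0 ≤ ρ θ) ∧
    0 < ∫ θ in t₀..T₀, ρ θ

/-- The normalizing constant `z_t`. -/
def zt (d : ℕ) (T : ℝ) (ρ : ℝ → ℝ) (t : ℝ) : ℝ :=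
  sphereVol (d - 1) * (t / T) * ∫ θ in (0 : ℝ)..T, (Real.sin (t * θ / T)) ^ (d - 2) * ρ θ

/-- The spherical cap `C(ξ, t)`. -/
def cap (d : ℕ) (ξ : Sphere d) (t : ℝ) : Set (Sphere d) :=
  {η | Real.cos t ≤ inner (𝕜 := ℝ) (ξ : EuclideanSpace ℝ (Fin d)) (η : EuclideanSpace ℝ (Fin d))}

/-- The generalized average `A_t^ρ f (ξ)`. -/
def avg (d : ℕ) (T : ℝ) (ρ : ℝ → ℝ) (f : Sphere d → ℂ) (t : ℝ) (ξ : Sphere d) : ℂ :=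
  (zt d T ρ t : ℂ)⁻¹ *
    ∫ η in cap d ξ t,
      (ρ ((T / t) * Real.arccos (inner (𝕜 := ℝ) (ξ : EuclideanSpace ℝ (Fin d))
        (η : EuclideanSpace ℝ (Fin d)))) : ℂ) * f η ∂(sphereMeasure d)

/-- The Legendre polynomial `P_{l,d}` of degree `l` in dimension `d`. -/
def LegendreP (d l : ℕ) (s : ℝ) : ℝ :=
  (l.factorial : ℝ) * Real.Gamma (((d : ℝ) - 1) / 2) *
    ∑ k ∈ Finset.range (l / 2 + 1),
      (-1) ^ k * (1 - s ^ 2) ^ k * s ^ (l - 2 * k) /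
        (4 ^ k * (k.factorial : ℝ) * ((l - 2 * k).factorial : ℝ) *
          Real.Gamma ((k : ℝ) + ((d : ℝ) - 1) / 2))

/-- `c_{k,l} = (-1)^k P_{l,d}^{(k)}(1) / k!`. -/
def legCoeff (d k l : ℕ) : ℝ :=
  (-1) ^ k * iteratedDeriv k (LegendreP d l) 1 / (k.factorial : ℝ)

/-- The multiplier `m_{l,t}^ρ`. -/
def mlt (d : ℕ) (T : ℝ) (ρ : ℝ → ℝ) (l : ℕ) (t : ℝ) : ℝ :=
  sphereVol (d - 1) / zt d T ρ t * (t / T) *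
    ∫ θ in (0 : ℝ)..T,
      LegendreP d l (Real.cos (t * θ / T)) * (Real.sin (t * θ / T)) ^ (d - 2) * ρ θ

/-- `B_k^ρ(t) = A_t^ρ(|ξ-·|^{2k})(ξ)`. -/
def Bk (d : ℕ) (T : ℝ) (ρ : ℝ → ℝ) (k : ℕ) (t : ℝ) : ℝ :=
  2 ^ k * (sphereVol (d - 1) / zt d T ρ t) * (t / T) *
    ∫ θ in (0 : ℝ)..T,
      (1 - Real.cos (t * θ / T)) ^ k * (Real.sin (t * θ / T)) ^ (d - 2) * ρ θ

/-- `M_{n,l,t}^ρ`. -/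
def Mnlt (d : ℕ) (T : ℝ) (ρ : ℝ → ℝ) (n l : ℕ) (t : ℝ) : ℝ :=
  mlt d T ρ l t - ∑ k ∈ Finset.range (n + 1), legCoeff d k l / 2 ^ k * Bk d T ρ k t

/-- `N_{n,l,t}^ρ`. -/
def Nnlt (d : ℕ) (T : ℝ) (ρ : ℝ → ℝ) (n l : ℕ) (t : ℝ) : ℝ :=
  Mnlt d T ρ (n - 1) l t - legCoeff d n l / 2 ^ n * Bk d T ρ n t * mlt d T ρ l t

/-- `I_{α,n}^{ρ,T}(l)`. -/
def Ifun (d : ℕ) (T : ℝ) (ρ : ℝ → ℝ) (n : ℕ) (α : ℝ) (l : ℕ) : ℝ≥0∞ :=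
  ∫⁻ t in Set.Ioc (0 : ℝ) T, ENNReal.ofReal (|Mnlt d T ρ n l t| ^ 2 / t ^ (2 * α + 1))

/-- `J_n^{ρ,T}(l)`. -/
def Jfun (d : ℕ) (T : ℝ) (ρ : ℝ → ℝ) (n l : ℕ) : ℝ≥0∞ :=
  ∫⁻ t in Set.Ioc (0 : ℝ) T, ENNReal.ofReal (|Nnlt d T ρ n l t| ^ 2 / t ^ (4 * n + 1))

/-- A spherical harmonic of degree `l`: the restriction to the sphere of a harmonic
homogeneous polynomial of degree `l` on `ℝ^d`. -/
def IsSphericalHarmonic (d l : ℕ) (Y : Sphere d → ℂ) : Prop :=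
  ∃ p : MvPolynomial (Fin d) ℂ, p.IsHomogeneous l ∧
    (∑ i : Fin d, MvPolynomial.pderiv i (MvPolynomial.pderiv i p)) = 0 ∧
    ∀ η : Sphere d,
      Y η = MvPolynomial.eval
        (fun i => (((η : EuclideanSpace ℝ (Fin d)) i : ℝ) : ℂ)) p

/-- A complete orthonormal system of spherical harmonics on `S^{d-1}`. -/
structure SHBasis (d : ℕ) where
  ν : ℕ → ℕ
  Y : (l : ℕ) → Fin (ν l) → Sphere d → ℂ
  harmonic : ∀ l j, IsSphericalHarmonic d l (Y l j)
  orthonormal : ∀ l j l' j',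
    (∫ η, Y l j η * conj (Y l' j' η) ∂(sphereMeasure d)) =
      if l = l' ∧ (j : ℕ) = (j' : ℕ) then 1 else 0
  complete : ∀ f : Sphere d → ℂ, MemLp f 2 (sphereMeasure d) →
    (∀ l j, (∫ η, f η * conj (Y l j η) ∂(sphereMeasure d)) = 0) →
    f =ᵐ[sphereMeasure d] 0

/-- The Fourier coefficient `f̂_{lj}` with respect to a spherical harmonic basis. -/
def shCoeff (d : ℕ) (B : SHBasis d) (f : Sphere d → ℂ) (l : ℕ) (j : Fin (B.ν l)) : ℂ :=
  ∫ η, f η * conj (B.Y l j η) ∂(sphereMeasure d)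

/-- Membership in the Sobolev space `H^α(S^{d-1})`. -/
def MemSobolev (d : ℕ) (B : SHBasis d) (α : ℝ) (f : Sphere d → ℂ) : Prop :=
  MemLp f 2 (sphereMeasure d) ∧
    Summable (fun l : ℕ =>
      (1 + Real.sqrt l * Real.sqrt ((l : ℝ) + d - 2)) ^ (2 * α) *
        ∑ j, ‖shCoeff d B f l j‖ ^ 2)

/-- The function `η ↦ |ξ - η|^{2k}` on the sphere, as a complex-valued function. -/
def distPow (d : ℕ) (ξ : Sphere d) (k : ℕ) : Sphere d → ℂ :=
  fun η => ((‖(ξ : EuclideanSpace ℝ (Fin d)) - (η : EuclideanSpace ℝ (Fin d))‖ ^ (2 * k) : ℝ) : ℂ)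

/-- The square of the generalized square function `S_α^{ρ,T}(f, g₁, …, g_n)(ξ)`,
valued in `ℝ≥0∞`.  For `α = 2n` the modified (endpoint) definition is used. -/
def sqFnSq (d : ℕ) (T : ℝ) (ρ : ℝ → ℝ) (n : ℕ) (α : ℝ)
    (f : Sphere d → ℂ) (g : ℕ → Sphere d → ℂ) (ξ : Sphere d) : ℝ≥0∞ :=
  if α = 2 * n then
    ∫⁻ t in Set.Ioc (0 : ℝ) T, ENNReal.ofReal
      (‖avg d T ρ f t ξ - f ξ -
          (∑ k ∈ Finset.Icc 1 (n - 1), g k ξ * avg d T ρ (distPow d ξ k) t ξ) -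
          avg d T ρ (g n) t ξ * avg d T ρ (distPow d ξ n) t ξ‖ ^ 2 / t ^ (2 * α + 1))
  else
    ∫⁻ t in Set.Ioc (0 : ℝ) T, ENNReal.ofReal
      (‖avg d T ρ f t ξ - f ξ -
          ∑ k ∈ Finset.Icc 1 n, g k ξ * avg d T ρ (distPow d ξ k) t ξ‖ ^ 2 / t ^ (2 * α + 1))

/-- Condition (⋆) on the weight `ρ`. -/
def starCond (d n : ℕ) (T T₀ : ℝ) (ρ : ℝ → ℝ) : Prop :=
  ((d : ℝ) - 1) / ((d : ℝ) + 2 * n - 1) *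
      ((∫ θ in (0 : ℝ)..T, θ ^ (d - 2) * ρ θ) ^ 2 *
        ∫ θ in (0 : ℝ)..T, θ ^ (2 * n + d) * ρ θ) /
      ((∫ θ in (0 : ℝ)..T₀, θ ^ (d - 2) * ρ θ) * (∫ θ in (0 : ℝ)..T₀, θ ^ d * ρ θ) *
        ∫ θ in (0 : ℝ)..T₀, θ ^ (2 * n + d - 2) * ρ θ) < 1

/-- `k_{d,n}(l)`. -/
def kdn (d n l : ℕ) : ℝ :=
  if l = n then 1 / 2
  else (2 * (n : ℝ) + d - 1) / (((l : ℝ) + n + d - 2) * ((l : ℝ) - n))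

/-- The angle `a_{d,n,ε}(l)` defined by `cos a = 1 - ε k_{d,n}(l)`. -/
def adn (d n : ℕ) (ε : ℝ) (l : ℕ) : ℝ := Real.arccos (1 - ε * kdn d n l)

/-- The Poisson kernel `p_r(η, ξ)` on `S^{d-1}`. -/
def sphPoissonKernel (d : ℕ) (r : ℝ) (η ξ : Sphere d) : ℝ :=
  (1 - r ^ 2) /
    (sphereVol d *
      ‖r • (ξ : EuclideanSpace ℝ (Fin d)) - (η : EuclideanSpace ℝ (Fin d))‖ ^ d)

/-- The Poisson transform `P_r f` of a complex-valued function. -/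
def poisson (d : ℕ) (r : ℝ) (f : Sphere d → ℂ) (ξ : Sphere d) : ℂ :=
  ∫ η, (sphPoissonKernel d r η ξ : ℂ) * f η ∂(sphereMeasure d)

/-- The Poisson transform `P_r u` of a real-valued function. -/
def poissonR (d : ℕ) (r : ℝ) (u : Sphere d → ℝ) (ξ : Sphere d) : ℝ :=
  ∫ η, sphPoissonKernel d r η ξ * u η ∂(sphereMeasure d)


set_option maxHeartbeats 1000000 in
lemma kdn_aux (d n : ℕ) (hd : 2 ≤ d) (hn : 1 ≤ n) :
    ∃ c₁ C₁ : ℝ, 0 < c₁ ∧ c₁ ≤ C₁ ∧ ∀ l : ℕ, n ≤ l →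
      0 < kdn d n l ∧ kdn d n l ≤ 1 ∧
      c₁ / (l : ℝ) ^ 2 ≤ kdn d n l ∧ kdn d n l ≤ C₁ / (l : ℝ) ^ 2 := by
  have hn1 : (1 : ℝ) ≤ n := by exact_mod_cast hn
  have hd2 : (2 : ℝ) ≤ d := by exact_mod_cast hd
  set A : ℝ := 2 * (n : ℝ) + d - 1 with hAdef
  set B : ℝ := (n : ℝ) + d - 1 with hBdef
  have hA : 0 < A := by simp only [hAdef]; linarith
  have hB : 0 < B := by simp only [hBdef]; linarith
  set c₁ : ℝ := min ((n : ℝ) ^ 2 / 2) (A / B) with hc₁def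
  set C₁ : ℝ := max ((n : ℝ) ^ 2 / 2) (A * (n + 1)) with hC₁def
  have hc0 : 0 < c₁ := lt_min (by positivity) (by positivity)
  refine ⟨c₁, C₁, hc0, (min_le_left _ _).trans (le_max_left _ _), ?_⟩
  intro l hl
  rcases eq_or_lt_of_le hl with h | hlt
  · rw [kdn, if_pos h.symm, ← h]
    have hn0 : (0 : ℝ) < (n : ℝ) ^ 2 := by positivity
    refine ⟨by norm_num, by norm_num, ?_, ?_⟩
    · rw [div_le_iff₀ hn0]
      have h1 : c₁ ≤ (n : ℝ) ^ 2 / 2 := min_le_left _ _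
      linarith
    · rw [le_div_iff₀ hn0]
      have h1 : (n : ℝ) ^ 2 / 2 ≤ C₁ := le_max_left _ _
      linarith
  · have hln : l ≠ n := by omega
    rw [kdn, if_neg hln]
    have hl1 : (n : ℝ) + 1 ≤ (l : ℝ) := by exact_mod_cast hlt
    set L : ℝ := (l : ℝ) with hLdef
    have hLn : (1 : ℝ) ≤ L - n := by linarith
    have hL2 : (2 : ℝ) ≤ L := by linarith
    have hD1 : (0 : ℝ) < L + n + d - 2 := by linarith
    have hD : (0 : ℝ) < (L + n + d - 2) * (L - n) := mul_pos hD1 (by linarith)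
    have hL0 : (0 : ℝ) < L ^ 2 := by positivity
    have hAD : A ≤ (L + n + d - 2) * (L - n) := by
      have h1 : A ≤ L + n + d - 2 := by simp only [hAdef]; linarith
      nlinarith
    refine ⟨div_pos hA hD, (div_le_one hD).2 hAD, ?_, ?_⟩
    · rw [div_le_div_iff₀ hL0 hD]
      have hcB : c₁ * B ≤ A := by
        have h := min_le_right ((n : ℝ) ^ 2 / 2) (A / B)
        calc c₁ * B ≤ A / B * B := mul_le_mul_of_nonneg_right h hB.le
          _ = A := by field_simp
      have hf1 : L + n + d - 2 ≤ B * L := by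
        have := mul_nonneg (show (0 : ℝ) ≤ (n : ℝ) + d - 2 by linarith)
          (show (0 : ℝ) ≤ L - 1 by linarith)
        simp only [hBdef]; nlinarith
      have hDle : (L + n + d - 2) * (L - n) ≤ B * L * L :=
        mul_le_mul hf1 (by linarith) (by linarith) (mul_nonneg hB.le (by linarith))
      nlinarith [mul_le_mul_of_nonneg_left hDle hc0.le,
        mul_le_mul_of_nonneg_right hcB
          (mul_nonneg (by linarith : (0:ℝ) ≤ L) (by linarith : (0:ℝ) ≤ L))]
    · rw [div_le_div_iff₀ hD hL0]
      have hC : A * (n + 1) ≤ C₁ := le_max_right _ _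
      have hg1 : L ≤ ((n : ℝ) + 1) * (L - n) := by
        nlinarith [mul_nonneg (show (0 : ℝ) ≤ (n : ℝ) by linarith)
          (show (0 : ℝ) ≤ L - (n + 1) by linarith)]
      have hLL : L * L ≤ (((n : ℝ) + 1) * (L - n)) * (L + n + d - 2) :=
        mul_le_mul hg1 (by linarith) (by linarith)
          (mul_nonneg (by linarith) (by linarith))
      nlinarith [mul_le_mul_of_nonneg_left hLL hA.le,
        mul_le_mul_of_nonneg_right hC hD.le]

/-- The angle `a_(d,n,ε)(l)` with `cos a_(d,n,ε)(l) = 1 - ε k_(d,n)(l)` is well defined in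
`(0, π/3]` and satisfies `a_(d,n,ε)(l) ∼ ε^(1/2) l⁻¹`. -/
theorem adn_wellDefined_and_comparable
    (d : ℕ) (hd : 2 ≤ d) (n : ℕ) (hn : 1 ≤ n) :
    (∀ ε : ℝ, 0 < ε → ε ≤ 1 / 2 → ∀ l : ℕ, n ≤ l →
      adn d n ε l ∈ Set.Ioc (0 : ℝ) (π / 3) ∧
        Real.cos (adn d n ε l) = 1 - ε * kdn d n l) ∧
    ∃ c C : ℝ, 0 < c ∧ c ≤ C ∧
      ∀ ε : ℝ, 0 < ε → ε ≤ 1 / 2 → ∀ l : ℕ, n ≤ l →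
        c * Real.sqrt ε / l ≤ adn d n ε l ∧ adn d n ε l ≤ C * Real.sqrt ε / l := by
  obtain ⟨c₁, C₁, hc₁, hc₁C₁, hk⟩ := kdn_aux d n hd hn
  have hC₁pos : 0 < C₁ := lt_of_lt_of_le hc₁ hc₁C₁
  have hwd : ∀ ε : ℝ, 0 < ε → ε ≤ 1 / 2 → ∀ l : ℕ, n ≤ l →
      adn d n ε l ∈ Set.Ioc (0 : ℝ) (π / 3) ∧
        Real.cos (adn d n ε l) = 1 - ε * kdn d n l := by
    intro ε hε hε' l hl
    obtain ⟨hkpos, hk1, -, -⟩ := hk l hl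
    have hx1 : 1 - ε * kdn d n l < 1 := by nlinarith
    have hx2 : (1 : ℝ) / 2 ≤ 1 - ε * kdn d n l := by nlinarith
    have hcos : Real.cos (adn d n ε l) = 1 - ε * kdn d n l := by
      rw [adn]
      exact Real.cos_arccos (by linarith) hx1.le
    have hpos : 0 < adn d n ε l := by
      rw [adn]; exact Real.arccos_pos.2 hx1
    have hπle : adn d n ε l ≤ π := by rw [adn]; exact Real.arccos_le_pi _
    have hle : adn d n ε l ≤ π / 3 := by
      by_contra hgt
      push_neg at hgt
      have := Real.cos_lt_cos_of_nonneg_of_le_pi (by positivity) hπle hgt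
      rw [hcos, Real.cos_pi_div_three] at this
      linarith
    exact ⟨⟨hpos, hle⟩, hcos⟩
  refine ⟨hwd, Real.sqrt (2 * c₁), π * Real.sqrt (C₁ / 2), Real.sqrt_pos.2 (by linarith), ?_, ?_⟩
  · have hπ2 : (9 : ℝ) < π ^ 2 := by nlinarith [Real.pi_gt_three]
    have h1 : 2 * c₁ ≤ π ^ 2 * (C₁ / 2) := by nlinarith
    calc Real.sqrt (2 * c₁) ≤ Real.sqrt (π ^ 2 * (C₁ / 2)) := Real.sqrt_le_sqrt h1
      _ = π * Real.sqrt (C₁ / 2) := by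
          rw [Real.sqrt_mul (by positivity), Real.sqrt_sq Real.pi_pos.le]
  · intro ε hε hε' l hl
    obtain ⟨⟨hpos, hle⟩, hcos⟩ := hwd ε hε hε' l hl
    obtain ⟨hkpos, hk1, hklo, hkhi⟩ := hk l hl
    have hn1 : (1 : ℝ) ≤ n := by exact_mod_cast hn
    have hLn : (n : ℝ) ≤ l := by exact_mod_cast hl
    have hL0 : (0 : ℝ) < l := by linarith
    set a := adn d n ε l with hadef
    have hup : ε * kdn d n l ≤ a ^ 2 / 2 := by
      have h := Real.one_sub_sq_div_two_le_cos (x := a)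
      rw [hcos] at h
      linarith
    have hlow : 2 / π ^ 2 * a ^ 2 ≤ ε * kdn d n l := by
      have habs : |a| ≤ π := by
        rw [abs_of_pos hpos]
        linarith [Real.pi_pos]
      have h := Real.cos_le_one_sub_mul_cos_sq habs
      rw [hcos] at h
      linarith
    constructor
    · have h2 : (Real.sqrt (2 * c₁) * Real.sqrt ε / l) ^ 2 ≤ a ^ 2 := by
        have he : (Real.sqrt (2 * c₁) * Real.sqrt ε / l) ^ 2 = 2 * c₁ * ε / l ^ 2 := by
          rw [div_pow, mul_pow, Real.sq_sqrt (by linarith), Real.sq_sqrt hε.le]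
        rw [he]
        have h3 : ε * (c₁ / l ^ 2) ≤ ε * kdn d n l := mul_le_mul_of_nonneg_left hklo hε.le
        have h4 : 2 * c₁ * ε / l ^ 2 = 2 * (ε * (c₁ / l ^ 2)) := by ring
        rw [h4]
        linarith
      have hnn : 0 ≤ Real.sqrt (2 * c₁) * Real.sqrt ε / l := by positivity
      have := Real.sqrt_le_sqrt h2
      rwa [Real.sqrt_sq hnn, Real.sqrt_sq hpos.le] at this
    · have h2 : a ^ 2 ≤ (π * Real.sqrt (C₁ / 2) * Real.sqrt ε / l) ^ 2 := by
        have he : (π * Real.sqrt (C₁ / 2) * Real.sqrt ε / l) ^ 2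
            = π ^ 2 * (C₁ / 2) * ε / l ^ 2 := by
          rw [div_pow, mul_pow, mul_pow, Real.sq_sqrt (by linarith), Real.sq_sqrt hε.le]
        rw [he]
        have h3 : ε * kdn d n l ≤ ε * (C₁ / l ^ 2) := mul_le_mul_of_nonneg_left hkhi hε.le
        have hπ0 : (0 : ℝ) < π ^ 2 := by positivity
        have h5 : a ^ 2 ≤ π ^ 2 / 2 * (ε * kdn d n l) := by
          have hh := mul_le_mul_of_nonneg_left hlow (by positivity : (0:ℝ) ≤ π ^ 2 / 2)
          have heq : π ^ 2 / 2 * (2 / π ^ 2 * a ^ 2) = a ^ 2 := by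
            field_simp
          linarith
        have h6 : π ^ 2 / 2 * (ε * kdn d n l) ≤ π ^ 2 / 2 * (ε * (C₁ / l ^ 2)) := by
          apply mul_le_mul_of_nonneg_left h3 (by positivity)
        have h7 : π ^ 2 / 2 * (ε * (C₁ / l ^ 2)) = π ^ 2 * (C₁ / 2) * ε / l ^ 2 := by ring
        linarith
      have hnn : 0 ≤ π * Real.sqrt (C₁ / 2) * Real.sqrt ε / l := by positivity
      have := Real.sqrt_le_sqrt h2
      rwa [Real.sqrt_sq hpos.le, Real.sqrt_sq hnn] at this


end
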